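/- Let S be a minimal a,b-separator of an induced subgraph G[Y] and let v be a vertex of G not in Y. If v is reachable from both a and b in G[Y ∪ {v}] - S, then S ∪ {v} is a minimal a,b-separator of G[Y ∪ {v}]; otherwise S itself is a minimal a,b-separator of G[Y ∪ {v}]. -/
import Mathlib


namespace PACE

open SimpleGraph

variable {V : Type*}

/-- Reachability within the induced subgraph `G[A]`. -/
def ReachIn (G : SimpleGraph V) (A : Set V) (a b : V) : Prop :=
  ∃ (ha : a ∈ A) (hb : b ∈ A), (G.induce A).Reachable ⟨a, ha⟩ ⟨b, hb⟩

/-- `S` is an `a,b`-separator of the induced subgraph `G[Y]`. -/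
def IsSepIn (G : SimpleGraph V) (Y S : Set V) (a b : V) : Prop :=
  S ⊆ Y ∧ a ∈ Y \ S ∧ b ∈ Y \ S ∧ ¬ ReachIn G (Y \ S) a b

/-- `S` is a minimal `a,b`-separator of `G[Y]`. -/
def IsMinSepIn (G : SimpleGraph V) (Y S : Set V) (a b : V) : Prop :=
  IsSepIn G Y S a b ∧ ∀ S' ⊂ S, ¬ IsSepIn G Y S' a b

/-- `S` is a minimal separator of `G`. -/
def IsMinSep (G : SimpleGraph V) (S : Set V) : Prop :=
  ∃ a b, IsMinSepIn G Set.univ S a b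

/-- `C` is (the vertex set of) a connected component of `G[A]`. -/
def IsCompOf (G : SimpleGraph V) (A C : Set V) : Prop :=
  C ⊆ A ∧ C.Nonempty ∧ (G.induce C).Connected ∧
    ∀ u ∈ C, ∀ v ∈ A \ C, ¬ G.Adj u v

/-- The open neighborhood of a vertex set. -/
def nbhdSet (G : SimpleGraph V) (C : Set V) : Set V :=
  {v | v ∉ C ∧ ∃ u ∈ C, G.Adj u v}

/-- A treedepth decomposition (elimination forest) of `G`, given by its
ancestor relation: a partial order in which the set of ancestors of any vertex
is a chain, and every edge of `G` joins an ancestor-descendant pair. -/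
structure TDForest (G : SimpleGraph V) where
  anc : V → V → Prop
  refl : ∀ v, anc v v
  antisymm : ∀ u v, anc u v → anc v u → u = v
  trans : ∀ u v w, anc u v → anc v w → anc u w
  ancChain : ∀ u w v, anc u v → anc w v → anc u w ∨ anc w u
  adjComparable : ∀ u v, G.Adj u v → anc u v ∨ anc v u

/-- Depth of an elimination forest: the maximum number of vertices on a
root-to-vertex path. -/
noncomputable def TDForest.depth {G : SimpleGraph V} (F : TDForest G) : ℕ :=
  ⨆ v, Set.ncard {u | F.anc u v}

/-- Treedepth: the minimum depth of an elimination forest. -/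
noncomputable def treedepth (G : SimpleGraph V) : ℕ :=
  sInf {k | ∃ F : TDForest G, F.depth ≤ k}



section Aux

variable {V : Type*}

lemma walk_mono {G : SimpleGraph V} {A B : Set V} (hAB : A ⊆ B) :
    ∀ {x y : ↥A} (_ : (G.induce A).Walk x y),
      (G.induce B).Reachable ⟨x, hAB x.2⟩ ⟨y, hAB y.2⟩ := by
  intro x y p
  induction p with
  | nil => exact SimpleGraph.Reachable.refl _
  | cons hadj _ ih =>
    exact (SimpleGraph.Adj.reachable (by exact hadj)).trans ih

lemma reachIn_mono (G : SimpleGraph V) {A B : Set V} (hAB : A ⊆ B) {a b : V}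
    (h : ReachIn G A a b) : ReachIn G B a b := by
  obtain ⟨ha, hb, hr⟩ := h
  obtain ⟨p⟩ := hr
  exact ⟨hAB ha, hAB hb, walk_mono hAB p⟩

lemma reachIn_symm (G : SimpleGraph V) {A : Set V} {a b : V}
    (h : ReachIn G A a b) : ReachIn G A b a := by
  obtain ⟨ha, hb, hr⟩ := h
  exact ⟨hb, ha, hr.symm⟩

lemma reachIn_trans (G : SimpleGraph V) {A : Set V} {a b c : V}
    (h1 : ReachIn G A a b) (h2 : ReachIn G A b c) : ReachIn G A a c := by
  obtain ⟨ha, hb, hr1⟩ := h1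
  obtain ⟨hb', hc, hr2⟩ := h2
  exact ⟨ha, hc, hr1.trans hr2⟩

lemma walk_avoid {G : SimpleGraph V} {A : Set V} {v : V} :
    ∀ {x y : ↥(A ∪ {v})} (p : (G.induce (A ∪ {v})).Walk x y),
      (∀ z ∈ p.support, (z : V) ≠ v) →
      ∃ (hx : (x : V) ∈ A) (hy : (y : V) ∈ A),
        (G.induce A).Reachable ⟨x, hx⟩ ⟨y, hy⟩
  | x, _, SimpleGraph.Walk.nil, h => by
      have hx : (x : V) ≠ v := h x (by simp)
      have hxA : (x : V) ∈ A := x.2.resolve_right (by simpa using hx)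
      exact ⟨hxA, hxA, SimpleGraph.Reachable.refl _⟩
  | x, y, SimpleGraph.Walk.cons hadj q, h => by
      have hx : (x : V) ≠ v := h x (by simp)
      have hxA : (x : V) ∈ A := x.2.resolve_right (by simpa using hx)
      obtain ⟨hwA, hyA, hr⟩ := walk_avoid q (fun z hz => h z (by simp [hz]))
      exact ⟨hxA, hyA, (SimpleGraph.Adj.reachable (by exact hadj)).trans hr⟩

lemma reachIn_split (G : SimpleGraph V) (A : Set V) (v a b : V)
    (h : ReachIn G (A ∪ {v}) a b) :
    ReachIn G A a b ∨
      (ReachIn G (A ∪ {v}) a v ∧ ReachIn G (A ∪ {v}) b v) := by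
  classical
  obtain ⟨ha, hb, hr⟩ := h
  obtain ⟨p⟩ := hr
  have hvmem : v ∈ A ∪ {v} := Or.inr rfl
  by_cases hvp : (⟨v, hvmem⟩ : ↥(A ∪ {v})) ∈ p.support
  · right
    refine ⟨⟨ha, hvmem, ⟨p.takeUntil _ hvp⟩⟩, ⟨hb, hvmem, ?_⟩⟩
    exact (SimpleGraph.Reachable.symm ⟨p.dropUntil _ hvp⟩)
  · left
    have havoid : ∀ z ∈ p.support, (z : V) ≠ v := by
      intro z hz hzv
      apply hvp
      have : z = (⟨v, hvmem⟩ : ↥(A ∪ {v})) := Subtype.ext hzv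
      rwa [this] at hz
    obtain ⟨hxA, hyA, hr⟩ := walk_avoid p havoid
    exact ⟨hxA, hyA, hr⟩

end Aux

theorem stmt4 {V : Type*} [Fintype V] (G : SimpleGraph V) (Y : Set V)
    (v : V) (hv : v ∉ Y) (S : Set V) (a b : V)
    (hS : IsMinSepIn G Y S a b) :
    (ReachIn G ((Y ∪ {v}) \ S) a v ∧ ReachIn G ((Y ∪ {v}) \ S) b v →
        IsMinSepIn G (Y ∪ {v}) (S ∪ {v}) a b) ∧
    (¬ (ReachIn G ((Y ∪ {v}) \ S) a v ∧ ReachIn G ((Y ∪ {v}) \ S) b v) →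
        IsMinSepIn G (Y ∪ {v}) S a b) := by
  classical
  obtain ⟨⟨hSY, ⟨haY, haS⟩, ⟨hbY, hbS⟩, hnr⟩, hmin⟩ := hS
  have hvS : v ∉ S := fun h => hv (hSY h)
  have hav : a ≠ v := fun h => hv (h ▸ haY)
  have hbv : b ≠ v := fun h => hv (h ▸ hbY)
  have hset1 : (Y ∪ {v}) \ (S ∪ {v}) = Y \ S := by
    ext x
    constructor
    · rintro ⟨hx1 | hx1, hx2⟩
      · exact ⟨hx1, fun h => hx2 (Or.inl h)⟩
      · exact absurd (Or.inr hx1) hx2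
    · rintro ⟨hx1, hx2⟩
      exact ⟨Or.inl hx1, by rintro (h | h); exact hx2 h; exact hv (h ▸ hx1)⟩
  have hset2 : (Y ∪ {v}) \ S = (Y \ S) ∪ {v} := by
    ext x
    constructor
    · rintro ⟨hx1 | hx1, hx2⟩
      · exact Or.inl ⟨hx1, hx2⟩
      · exact Or.inr hx1
    · rintro (⟨hx1, hx2⟩ | hx1)
      · exact ⟨Or.inl hx1, hx2⟩
      · exact ⟨Or.inr hx1, fun h => hvS (hx1 ▸ h)⟩
  constructor
  · rintro ⟨hra, hrb⟩
    constructor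
    · refine ⟨?_, ⟨Or.inl haY, ?_⟩, ⟨Or.inl hbY, ?_⟩, ?_⟩
      · rintro x (hx | hx); exact Or.inl (hSY hx); exact Or.inr hx
      · rintro (h | h); exact haS h; exact hav h
      · rintro (h | h); exact hbS h; exact hbv h
      · rw [hset1]; exact hnr
    · intro S' hS' hsep
      by_cases hvS' : v ∈ S'
      · -- use minimality of S on S' \ {v}
        have hsub : S' \ {v} ⊂ S := by
          constructor
          · rintro x ⟨hx1, hx2⟩
            rcases hS'.1 hx1 with h | h
            · exact h
            · exact absurd h hx2
          · intro hcon
            obtain ⟨x, hx1, hx2⟩ := Set.exists_of_ssubset hS'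
            rcases hx1 with h | h
            · exact hx2 (hcon h).1
            · exact hx2 (h ▸ hvS')
        apply hmin _ hsub
        have hseteq : Y \ (S' \ {v}) = (Y ∪ {v}) \ S' := by
          ext x
          constructor
          · rintro ⟨hx1, hx2⟩
            exact ⟨Or.inl hx1, fun h => hx2 ⟨h, fun he => hv (he ▸ hx1)⟩⟩
          · rintro ⟨hx1 | hx1, hx2⟩
            · exact ⟨hx1, fun h => hx2 h.1⟩
            · exact absurd (hx1 ▸ hvS') hx2
        refine ⟨fun x hx => hSY (hsub.1 hx), ⟨haY, fun h => haS (hsub.1 h)⟩,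
          ⟨hbY, fun h => hbS (hsub.1 h)⟩, ?_⟩
        rw [hseteq]
        exact hsep.2.2.2
      · -- S' ⊆ S, so a reaches b through v
        have hsub : S' ⊆ S := by
          intro x hx
          rcases hS'.1 hx with h | h
          · exact h
          · exact absurd (h ▸ hx) hvS'
        have hmono : (Y ∪ {v}) \ S ⊆ (Y ∪ {v}) \ S' :=
          Set.diff_subset_diff_right hsub
        have : ReachIn G ((Y ∪ {v}) \ S') a b :=
          reachIn_trans G (reachIn_mono G hmono hra)
            (reachIn_symm G (reachIn_mono G hmono hrb))
        exact hsep.2.2.2 this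
  · intro hcase
    constructor
    · refine ⟨fun x hx => Or.inl (hSY hx), ⟨Or.inl haY, haS⟩, ⟨Or.inl hbY, hbS⟩, ?_⟩
      intro hreach
      rw [hset2] at hreach
      rcases reachIn_split G (Y \ S) v a b hreach with h | ⟨h1, h2⟩
      · exact hnr h
      · rw [← hset2] at h1 h2
        exact hcase ⟨h1, h2⟩
    · intro S' hS' hsep
      have := hmin S' hS'
      apply this
      refine ⟨hS'.1.trans hSY, ⟨haY, fun h => haS (hS'.1 h)⟩,
        ⟨hbY, fun h => hbS (hS'.1 h)⟩, ?_⟩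
      intro hreach
      apply hsep.2.2.2
      exact reachIn_mono G (Set.diff_subset_diff_left Set.subset_union_left) hreach


end PACE
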